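/- The generalized Leibniz rule, defined on formal series (Σ_{i≤n} a_i ∂^i)(Σ_{j≤m} b_j ∂^j) := Σ_{i,j} Σ_{k≥0} binom(i,k) a_i (∂^k b_j) ∂^{i+j-k}, endows the set P of pseudodifferential operators over a commutative ring A with derivation ∂ with the structure of an associative ring with identity element 1·∂^0. -/

import Mathlib

/-- A pseudodifferential operator over `A`: a formal series `Σ_{i ≤ n} a_i ∂^i`,
encoded by its coefficient function `ℤ → A`, with support bounded above. -/
def PDO (A : Type) [Ring A] : Type := {f : ℤ → A // ∃ n : ℤ, ∀ i > n, f i = 0}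

variable {A : Type} [Ring A]

/-- The zero pseudodifferential operator. -/
def pdoZero (A : Type) [Ring A] : PDO A := ⟨fun _ => 0, ⟨0, fun _ _ => rfl⟩⟩

/-- The identity pseudodifferential operator `1·∂^0`. -/
def pdoOne (A : Type) [Ring A] : PDO A :=
  ⟨fun i => if i = 0 then 1 else 0, ⟨0, fun i hi => if_neg (by omega)⟩⟩

/-- The pseudodifferential operator `∂` itself, i.e. `1·∂^1`. -/
def pdoDel (A : Type) [Ring A] : PDO A :=
  ⟨fun i => if i = 1 then 1 else 0, ⟨1, fun i hi => if_neg (by omega)⟩⟩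

/-- A constant-symbol pdo `a·∂^0`. -/
def pdoConst (a : A) : PDO A :=
  ⟨fun i => if i = 0 then a else 0, ⟨0, fun i hi => if_neg (by omega)⟩⟩

/-- Pointwise addition of pseudodifferential operators. -/
def pdoAdd (P Q : PDO A) : PDO A :=
  ⟨fun i => P.1 i + Q.1 i,
   ⟨max P.2.choose Q.2.choose, fun i hi => by
      dsimp only
      rw [P.2.choose_spec i (lt_of_le_of_lt (le_max_left _ _) hi),
          Q.2.choose_spec i (lt_of_le_of_lt (le_max_right _ _) hi), add_zero]⟩⟩

/-- Pointwise negation. -/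
def pdoNeg (P : PDO A) : PDO A :=
  ⟨fun i => -(P.1 i), ⟨P.2.choose, fun i hi => by dsimp only; rw [P.2.choose_spec i hi, neg_zero]⟩⟩

/-- The generalized Leibniz product of pseudodifferential operators
`(Σ_{i≤n} a_i ∂^i)(Σ_{j≤m} b_j ∂^j) = Σ_{i,j} Σ_{k≥0} binom(i,k) a_i (∂^k b_j) ∂^{i+j-k}`,
where `binom(i,k)` is the generalized binomial coefficient (`Ring.choose` on `ℤ`)
and `d` plays the role of the derivation `∂` of `A`. -/
noncomputable def pdoMul (d : A → A) (P Q : PDO A) : PDO A :=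
  ⟨fun N => ∑ i ∈ Finset.Icc (N - Q.2.choose) P.2.choose,
      ∑ j ∈ Finset.Icc (N - i) Q.2.choose,
        (Ring.choose i (i + j - N).toNat : ℤ) • (P.1 i * d^[(i + j - N).toNat] (Q.1 j)),
   ⟨P.2.choose + Q.2.choose, fun N hN => by
      dsimp only
      rw [Finset.Icc_eq_empty (by omega), Finset.sum_empty]⟩⟩

/-- `P` has order `≤ n` : all coefficients above `n` vanish. -/
def pdoOrderLE (P : PDO A) (n : ℤ) : Prop := ∀ i > n, P.1 i = 0

/-! Each coefficient of a product is a finite sum, taken here as a `finsum` over the pairs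
`(i, k) : ℤ × ℕ`, so the distributive and unit laws hold termwise. For associativity, the
`N`-th coefficients of `(P Q) R` and of `P (Q R)` are both reindexed to one finite sum over
`(i, j, a, b, k)` of `C(a+b, a) binom(i, a+b) binom(j, k) a_i ∂^a(b_j) ∂^(b+k)(c_l)`. On the left this is the
Chu–Vandermonde identity
`binom(i, α) binom(i+j-α, β) = Σ_{b+k=β} C(α+b, α) binom(i, α+b) binom(j, k)`;
on the right it is the iterated Leibniz rule applied to `∂^K(b_j ∂^k c_l)`. -/

open Finset Function

theorem Derivation.iterate_leibniz {R A : Type*} [CommSemiring R] [CommSemiring A] [Algebra R A]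
    (D : Derivation R A A) (n : ℕ) (a b : A) :
    D^[n] (a * b) = ∑ ij ∈ antidiagonal n, n.choose ij.1 • (D^[ij.1] a * D^[ij.2] b) := by
  induction n with
  | zero => simp
  | succ n ih =>
    rw [sum_antidiagonal_choose_succ_nsmul (fun i j => D^[i] a * D^[j] b) n]
    simp only [Function.iterate_succ_apply', ih, map_sum, map_nsmul, Derivation.leibniz,
      smul_eq_mul, smul_add, sum_add_distrib]
    congr 1
    refine sum_congr rfl fun ij hij => ?_
    rw [n.choose_symm_of_eq_add (HasAntidiagonal.mem_antidiagonal.1 hij).symm, mul_comm]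

theorem Ring.sum_antidiagonal_choose_mul_choose {R : Type*} [CommRing R] [BinomialRing R]
    (r s : R) (α β : ℕ) :
    ∑ p ∈ antidiagonal β, ((α + p.1).choose α : R) * Ring.choose r (α + p.1) * Ring.choose s p.2
      = Ring.choose r α * Ring.choose (r - α + s) β := by
  rw [Ring.add_choose_eq β (Commute.all _ _), mul_sum]
  refine sum_congr rfl fun p _ => ?_
  rw [← nsmul_eq_mul, Ring.choose_smul_choose r (Nat.le_add_right α p.1), Nat.add_sub_cancel_left,
    mul_assoc]

section Antidiagonal
variable {α M : Type*} [AddCommMonoid M]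

lemma support_sum_antidiagonal_subset (f : α × (ℕ × ℕ) → M) :
    support (fun x : α × ℕ => ∑ p ∈ antidiagonal x.2, f (x.1, p)) ⊆
      (fun y => (y.1, y.2.1 + y.2.2)) '' support f := by
  intro x hx
  obtain ⟨p, hp, hfp⟩ := exists_ne_zero_of_sum_ne_zero hx
  rw [HasAntidiagonal.mem_antidiagonal] at hp
  exact ⟨(x.1, p), hfp, by simp [hp]⟩

lemma Function.HasFiniteSupport.sum_antidiagonal {f : α × (ℕ × ℕ) → M} (hf : HasFiniteSupport f) :
    HasFiniteSupport (fun x : α × ℕ => ∑ p ∈ antidiagonal x.2, f (x.1, p)) :=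
  (Set.Finite.image _ hf).subset (support_sum_antidiagonal_subset f)

lemma finsum_sum_antidiagonal {f : α × (ℕ × ℕ) → M} (hf : HasFiniteSupport f) :
    ∑ᶠ x : α × ℕ, ∑ p ∈ antidiagonal x.2, f (x.1, p) = ∑ᶠ y, f y := by
  classical
  have hf : (support f).Finite := hf
  let s := hf.toFinset
  let g : α × (ℕ × ℕ) → α × ℕ := fun y => (y.1, y.2.1 + y.2.2)
  have fiber (x : α × ℕ) :
      ∑ p ∈ antidiagonal x.2, f (x.1, p) = ∑ y ∈ s with g y = x, f y := by
    refine (sum_map _ ⟨(x.1, ·), Prod.mk_right_injective x.1⟩ f).symm.trans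
      (sum_subset (fun y hy => ?_) fun y hy hy' => ?_).symm
    · obtain ⟨-, rfl⟩ := mem_filter.1 hy
      simp [g]
    · obtain ⟨p, hp, rfl⟩ := mem_map.1 hy
      rw [HasAntidiagonal.mem_antidiagonal] at hp
      simpa [s, g, hp] using hy'
  rw [finsum_eq_sum_of_support_subset _ (s := s.image g)
      (by simpa [s, g] using support_sum_antidiagonal_subset f),
    finsum_eq_sum_of_support_subset _ (s := s) (by simp [s]),
    ← sum_fiberwise_of_maps_to (fun y hy => mem_image_of_mem g hy)]
  exact sum_congr rfl fun x _ => fiber x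

end Antidiagonal

theorem PDO.ext {P Q : PDO A} (h : ∀ N, P.1 N = Q.1 N) : P = Q :=
  Subtype.ext (funext h)

theorem pdoAdd_comm (P Q : PDO A) : pdoAdd P Q = pdoAdd Q P :=
  PDO.ext fun N => add_comm (P.1 N) (Q.1 N)

theorem pdoAdd_assoc (P Q R : PDO A) : pdoAdd (pdoAdd P Q) R = pdoAdd P (pdoAdd Q R) :=
  PDO.ext fun N => add_assoc (P.1 N) (Q.1 N) (R.1 N)

theorem pdoZero_add (P : PDO A) : pdoAdd (pdoZero A) P = P :=
  PDO.ext fun N => zero_add (P.1 N)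

theorem pdoAdd_pdoNeg (P : PDO A) : pdoAdd P (pdoNeg P) = pdoZero A :=
  PDO.ext fun N => add_neg_cancel (P.1 N)

/-- The summand `binom(i,k) a_i ∂^k(b_j)` of the `N`-th coefficient of `P * Q`, indexed by
`(i, k)`; then `j = N - i + k`. -/
noncomputable def pdoMulTerm (d : A → A) (P Q : PDO A) (N : ℤ) (x : ℤ × ℕ) : A :=
  (Ring.choose x.1 x.2 : ℤ) • (P.1 x.1 * d^[x.2] (Q.1 (N - x.1 + x.2)))

section Multiplication
variable {A : Type} [CommRing A] (D : Derivation ℤ A A)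

lemma support_pdoMulTerm_subset {P Q : PDO A} {n m : ℤ} (hP : pdoOrderLE P n)
    (hQ : pdoOrderLE Q m) (N : ℤ) :
    support (pdoMulTerm D P Q N) ⊆ ↑(Icc (N - m) n ×ˢ range ((n + m - N).toNat + 1)) := by
  rintro ⟨i, k⟩ hx
  simp only [coe_product, Set.mem_prod, mem_coe, mem_Icc, mem_range]
  by_contra hout
  obtain hi | hj : n < i ∨ m < N - i + k := by omega
  · exact hx (by simp [pdoMulTerm, hP i hi])
  · exact hx (by simp [pdoMulTerm, hQ _ hj])

lemma hasFiniteSupport_pdoMulTerm (P Q : PDO A) (N : ℤ) :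
    HasFiniteSupport (pdoMulTerm D P Q N) := by
  obtain ⟨n, hP⟩ := P.2
  obtain ⟨m, hQ⟩ := Q.2
  exact (finite_toSet _).subset (support_pdoMulTerm_subset D hP hQ N)

theorem pdoMul_coeff (P Q : PDO A) (N : ℤ) :
    (pdoMul D P Q).1 N = ∑ᶠ x, pdoMulTerm D P Q N x := by
  set n := P.2.choose
  set m := Q.2.choose
  have hP : pdoOrderLE P n := P.2.choose_spec
  have hQ : pdoOrderLE Q m := Q.2.choose_spec
  rw [finsum_eq_sum_of_support_subset (pdoMulTerm D P Q N) (support_pdoMulTerm_subset D hP hQ N),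
    sum_product]
  dsimp only [pdoMul]
  refine sum_congr rfl fun i hi => ?_
  rw [mem_Icc] at hi
  calc ∑ j ∈ Icc (N - i) m, (Ring.choose i (i + j - N).toNat : ℤ) •
          (P.1 i * D^[(i + j - N).toNat] (Q.1 j))
      = ∑ j ∈ (range ((n + m - N).toNat + 1)).image (fun k : ℕ => N - i + k),
          (Ring.choose i (i + j - N).toNat : ℤ) • (P.1 i * D^[(i + j - N).toNat] (Q.1 j)) := by
        refine sum_subset (fun j hj => ?_) fun j hj hj' => ?_
        · rw [mem_Icc] at hj
          exact mem_image.2 ⟨(j - (N - i)).toNat, mem_range.2 (by omega), by omega⟩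
        · obtain ⟨k, -, rfl⟩ := mem_image.1 hj
          rw [mem_Icc, not_and_or] at hj'
          simp [hQ (N - i + k) (by omega)]
    _ = _ := by
        rw [sum_image fun a _ b _ h => by simpa using h]
        refine sum_congr rfl fun k _ => ?_
        rw [show (i + (N - i + k) - N).toNat = k by omega]
        rfl

theorem pdoMul_pdoAdd (P Q R : PDO A) :
    pdoMul D P (pdoAdd Q R) = pdoAdd (pdoMul D P Q) (pdoMul D P R) := by
  refine PDO.ext fun N => ?_
  change _ = (pdoMul D P Q).1 N + (pdoMul D P R).1 N
  rw [pdoMul_coeff, pdoMul_coeff, pdoMul_coeff, ← finsum_add_distrib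
    (hasFiniteSupport_pdoMulTerm D P Q N) (hasFiniteSupport_pdoMulTerm D P R N)]
  refine finsum_congr fun x => ?_
  simp only [pdoMulTerm, ← smul_add, ← mul_add, ← iterate_map_add]
  rfl

theorem pdoAdd_pdoMul (P Q R : PDO A) :
    pdoMul D (pdoAdd P Q) R = pdoAdd (pdoMul D P R) (pdoMul D Q R) := by
  refine PDO.ext fun N => ?_
  change _ = (pdoMul D P R).1 N + (pdoMul D Q R).1 N
  rw [pdoMul_coeff, pdoMul_coeff, pdoMul_coeff, ← finsum_add_distrib
    (hasFiniteSupport_pdoMulTerm D P R N) (hasFiniteSupport_pdoMulTerm D Q R N)]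
  refine finsum_congr fun x => ?_
  simp only [pdoMulTerm, ← smul_add, ← add_mul]
  rfl

theorem pdoOne_pdoMul (P : PDO A) : pdoMul D (pdoOne A) P = P := by
  refine PDO.ext fun N => ?_
  rw [pdoMul_coeff, finsum_eq_single _ (0, 0) fun x hx => ?_]
  · simp [pdoMulTerm, pdoOne]
  obtain ⟨i, k⟩ := x
  by_cases hi : i = 0
  · subst hi
    have hk : 0 < k := Nat.pos_of_ne_zero fun hk => hx (by simp [hk])
    simp [pdoMulTerm, Ring.choose_zero_pos ℤ hk]
  · simp [pdoMulTerm, pdoOne, hi]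

theorem pdoMul_pdoOne (P : PDO A) : pdoMul D P (pdoOne A) = P := by
  refine PDO.ext fun N => ?_
  rw [pdoMul_coeff, finsum_eq_single _ (N, 0) fun x hx => ?_]
  · simp [pdoMulTerm, pdoOne]
  obtain ⟨i, k⟩ := x
  by_cases hj : N - i + k = 0
  · obtain ⟨k, rfl⟩ : ∃ k', k = k' + 1 :=
      Nat.exists_eq_add_one.2 (Nat.pos_of_ne_zero fun hk => hx (by subst hk; simp; omega))
    push_cast at hj
    simp [pdoMulTerm, pdoOne, hj, iterate_succ_apply]
  · simp [pdoMulTerm, pdoOne, hj]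

end Multiplication

noncomputable def tripleTerm (d : A → A) (P Q R : PDO A) (N : ℤ) : (ℤ × ℤ × ℕ) × ℕ → A
  | ((i, j, α), β) => (Ring.choose i α * Ring.choose (i + j - α) β : ℤ) •
      (P.1 i * (d^[α] (Q.1 j) * d^[β] (R.1 (N - i - j + α + β))))

noncomputable def tripleTermSplit (d : A → A) (P Q R : PDO A) (N : ℤ) :
    (ℤ × ℤ × ℕ) × (ℕ × ℕ) → A
  | ((i, j, a), (b, k)) => (((a + b).choose a : ℤ) * Ring.choose i (a + b) * Ring.choose j k) •
      (P.1 i * (d^[a] (Q.1 j) * d^[b + k] (R.1 (N - i - j + a + b + k))))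

def assocLeftEquiv : (ℤ × ℕ) × (ℤ × ℕ) ≃ (ℤ × ℤ × ℕ) × ℕ where
  toFun | ((M, k), (i, α)) => ((i, M - i + α, α), k)
  invFun | ((i, j, α), β) => ((i + j - α, β), (i, α))
  left_inv := by rintro ⟨⟨M, k⟩, ⟨i, α⟩⟩; ext <;> simp; ring
  right_inv := by rintro ⟨⟨i, j, α⟩, β⟩; ext <;> simp; ring

def assocRightEquiv : (ℤ × ℕ) × (ℤ × ℕ) ≃ (ℤ × ℤ × ℕ) × ℕ where
  toFun | ((i, K), (j, k)) => ((i, j, k), K)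
  invFun | ((i, j, k), K) => ((i, K), (j, k))
  left_inv _ := rfl
  right_inv _ := rfl

def splitEquiv : (ℤ × ℤ × ℕ) × (ℕ × ℕ) ≃ (ℤ × ℤ × ℕ) × (ℕ × ℕ) where
  toFun | ((i, j, k), (a, b)) => ((i, j, a), (b, k))
  invFun | ((i, j, a), (b, k)) => ((i, j, k), (a, b))
  left_inv _ := rfl
  right_inv _ := rfl

section Associativity
variable {A : Type} [CommRing A] (D : Derivation ℤ A A) (P Q R : PDO A) (N : ℤ)

lemma hasFiniteSupport_tripleTermSplit : HasFiniteSupport (tripleTermSplit D P Q R N) := by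
  obtain ⟨n, hP⟩ := P.2
  obtain ⟨m, hQ⟩ := Q.2
  obtain ⟨p, hR⟩ := R.2
  set B := (n + m + p - N).toNat + 1
  refine (finite_toSet ((Icc (N - m - p) n ×ˢ Icc (N - n - p) m ×ˢ range B) ×ˢ
    (range B ×ˢ range B))).subset ?_
  rintro ⟨⟨i, j, a⟩, b, k⟩ hx
  simp only [coe_product, Set.mem_prod, mem_coe, mem_Icc, mem_range]
  by_contra hout
  obtain hi | hj | hl : n < i ∨ m < j ∨ p < N - i - j + a + b + k := by omega
  · exact hx (by simp [tripleTermSplit, hP i hi])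
  · exact hx (by simp [tripleTermSplit, hQ j hj])
  · exact hx (by simp [tripleTermSplit, hR _ hl])

lemma tripleTerm_eq_sum_antidiagonal : tripleTerm D P Q R N =
    fun x => ∑ p ∈ antidiagonal x.2, tripleTermSplit D P Q R N (x.1, p) := by
  funext ⟨⟨i, j, α⟩, β⟩
  have split : ∀ p ∈ antidiagonal β, tripleTermSplit D P Q R N ((i, j, α), p) =
      (((α + p.1).choose α : ℤ) * Ring.choose i (α + p.1) * Ring.choose j p.2) •
        (P.1 i * (D^[α] (Q.1 j) * D^[β] (R.1 (N - i - j + α + β)))) := by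
    rintro ⟨b, k⟩ hp
    rw [HasAntidiagonal.mem_antidiagonal] at hp
    subst hp
    simp only [tripleTermSplit, Nat.cast_add, add_assoc]
  rw [sum_congr rfl split, ← sum_smul, Ring.sum_antidiagonal_choose_mul_choose, sub_add_eq_add_sub]
  rfl

lemma finsum_tripleTerm :
    ∑ᶠ x, tripleTerm D P Q R N x = ∑ᶠ y, tripleTermSplit D P Q R N y := by
  rw [tripleTerm_eq_sum_antidiagonal,
    finsum_sum_antidiagonal (hasFiniteSupport_tripleTermSplit D P Q R N)]

lemma pdoMul_pdoMul_left_coeff :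
    (pdoMul D (pdoMul D P Q) R).1 N = ∑ᶠ x, tripleTerm D P Q R N x := by
  have hT : HasFiniteSupport (tripleTerm D P Q R N) := by
    rw [tripleTerm_eq_sum_antidiagonal]
    exact (hasFiniteSupport_tripleTermSplit D P Q R N).sum_antidiagonal
  calc (pdoMul D (pdoMul D P Q) R).1 N
      = ∑ᶠ (x) (y), tripleTerm D P Q R N (assocLeftEquiv (x, y)) := by
        rw [pdoMul_coeff]
        refine finsum_congr fun ⟨M, k⟩ => ?_
        have hfin : HasFiniteSupport fun y => pdoMulTerm D P Q M y * D^[k] (R.1 (N - M + k)) :=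
          (hasFiniteSupport_pdoMulTerm D P Q M).mul_left _
        rw [pdoMulTerm, pdoMul_coeff, finsum_mul' _ _ (hasFiniteSupport_pdoMulTerm D P Q M),
          smul_finsum' _ hfin]
        refine finsum_congr fun ⟨i, α⟩ => ?_
        change _ = tripleTerm D P Q R N ((i, M - i + α, α), k)
        rw [tripleTerm, show i + (M - i + α) - α = M by ring,
          show N - i - (M - i + α) + α + k = N - M + k by ring]
        simp only [pdoMulTerm]
        rw [smul_mul_assoc, smul_smul, mul_assoc, mul_comm (Ring.choose M k)]
    _ = ∑ᶠ w, tripleTerm D P Q R N (assocLeftEquiv w) :=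
        (finsum_curry _ (hT.comp_of_injective assocLeftEquiv.injective)).symm
    _ = _ := finsum_comp_equiv assocLeftEquiv

lemma pdoMul_pdoMul_right_coeff :
    (pdoMul D P (pdoMul D Q R)).1 N = ∑ᶠ y, tripleTermSplit D P Q R N y := by
  let g : (ℤ × ℤ × ℕ) × ℕ → A := fun w =>
    ∑ p ∈ antidiagonal w.2, tripleTermSplit D P Q R N (splitEquiv (w.1, p))
  have hS := hasFiniteSupport_tripleTermSplit D P Q R N
  have hg : HasFiniteSupport g := (hS.comp_of_injective splitEquiv.injective).sum_antidiagonal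
  calc (pdoMul D P (pdoMul D Q R)).1 N
      = ∑ᶠ (x) (y), g (assocRightEquiv (x, y)) := by
        rw [pdoMul_coeff]
        refine finsum_congr fun ⟨i, K⟩ => ?_
        let φ : A →+ A := (Ring.choose i K : ℤ) •
          (AddMonoidHom.mulLeft (P.1 i)).comp ((D : Module.End ℤ A) ^ K).toAddMonoidHom
        have hφ : pdoMulTerm D P (pdoMul D Q R) N (i, K) = φ ((pdoMul D Q R).1 (N - i + K)) := by
          simp [φ, pdoMulTerm, Module.End.coe_pow]
        rw [hφ, pdoMul_coeff, map_finsum φ (hasFiniteSupport_pdoMulTerm D Q R _)]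
        refine finsum_congr fun ⟨j, k⟩ => ?_
        change φ _ = ∑ p ∈ antidiagonal K, tripleTermSplit D P Q R N ((i, j, p.1), (p.2, k))
        simp only [φ, pdoMulTerm, AddMonoidHom.smul_apply, AddMonoidHom.comp_apply,
          AddMonoidHom.coe_mulLeft, LinearMap.toAddMonoidHom_coe, map_zsmul, Module.End.coe_pow,
          Derivation.coeFn_coe, D.iterate_leibniz, mul_sum, smul_sum]
        refine sum_congr rfl fun ⟨a, b⟩ hp => ?_
        rw [HasAntidiagonal.mem_antidiagonal] at hp
        subst hp
        dsimp only
        rw [tripleTermSplit, ← iterate_add_apply, mul_smul_comm, ← Nat.cast_smul_eq_nsmul ℤ,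
          smul_smul, smul_smul,
          show N - i + ↑(a + b) - j + k = N - i - j + a + b + k by push_cast; ring]
        congr 1
        ring
    _ = ∑ᶠ w, g (assocRightEquiv w) :=
        (finsum_curry _ (hg.comp_of_injective assocRightEquiv.injective)).symm
    _ = ∑ᶠ w, g w := finsum_comp_equiv assocRightEquiv
    _ = ∑ᶠ v, tripleTermSplit D P Q R N (splitEquiv v) :=
        finsum_sum_antidiagonal (hS.comp_of_injective splitEquiv.injective)
    _ = _ := finsum_comp_equiv splitEquiv

theorem pdoMul_assoc : pdoMul D (pdoMul D P Q) R = pdoMul D P (pdoMul D Q R) :=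
  PDO.ext fun N => by
    rw [pdoMul_pdoMul_left_coeff, finsum_tripleTerm, pdoMul_pdoMul_right_coeff]

end Associativity

theorem Derivation.exists_coe_eq_of_leibniz {A : Type*} [CommRing A] (d : A → A)
    (hadd : ∀ a b : A, d (a + b) = d a + d b) (hleib : ∀ a b : A, d (a * b) = a * d b + d a * b) :
    ∃ D : Derivation ℤ A A, ⇑D = d :=
  ⟨Derivation.mk' (AddMonoidHom.mk' d hadd).toIntLinearMap fun a b => by
    simp [hleib, mul_comm], rfl⟩

theorem pdo_ring_structure_general {A : Type} [CommRing A] (d : A → A)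
    (hadd : ∀ a b : A, d (a + b) = d a + d b)
    (hleib : ∀ a b : A, d (a * b) = a * d b + d a * b) :
    -- additive abelian group laws (pointwise addition)
    (∀ P Q : PDO A, pdoAdd P Q = pdoAdd Q P) ∧
    (∀ P Q R : PDO A, pdoAdd (pdoAdd P Q) R = pdoAdd P (pdoAdd Q R)) ∧
    (∀ P : PDO A, pdoAdd (pdoZero A) P = P) ∧
    (∀ P : PDO A, pdoAdd P (pdoNeg P) = pdoZero A) ∧
    -- associativity of the Leibniz product
    (∀ P Q R : PDO A, pdoMul d (pdoMul d P Q) R = pdoMul d P (pdoMul d Q R)) ∧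
    -- `1·∂^0` is a two-sided identity
    (∀ P : PDO A, pdoMul d (pdoOne A) P = P) ∧
    (∀ P : PDO A, pdoMul d P (pdoOne A) = P) ∧
    -- distributivity
    (∀ P Q R : PDO A, pdoMul d P (pdoAdd Q R) = pdoAdd (pdoMul d P Q) (pdoMul d P R)) ∧
    (∀ P Q R : PDO A, pdoMul d (pdoAdd P Q) R = pdoAdd (pdoMul d P R) (pdoMul d Q R)) := by
  obtain ⟨D, rfl⟩ := Derivation.exists_coe_eq_of_leibniz d hadd hleib
  exact ⟨pdoAdd_comm, pdoAdd_assoc, pdoZero_add, pdoAdd_pdoNeg, pdoMul_assoc D, pdoOne_pdoMul D,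
    pdoMul_pdoOne D, pdoMul_pdoAdd D, pdoAdd_pdoMul D⟩

/-- the generalized Leibniz rule endows the set of pseudodifferential
operators over a commutative algebra `A` (over a field `K` of characteristic zero)
with derivation `∂ = d` with the structure of an associative (abelian-group-based)
ring with identity element `1·∂^0`. -/
theorem pdo_ring_structure (K : Type) [Field K] [CharZero K]
    {A : Type} [CommRing A] [Algebra K A] (d : A → A)
    (hadd : ∀ a b : A, d (a + b) = d a + d b)
    (hleib : ∀ a b : A, d (a * b) = a * d b + d a * b) :
    -- additive abelian group laws (pointwise addition)
    (∀ P Q : PDO A, pdoAdd P Q = pdoAdd Q P) ∧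
    (∀ P Q R : PDO A, pdoAdd (pdoAdd P Q) R = pdoAdd P (pdoAdd Q R)) ∧
    (∀ P : PDO A, pdoAdd (pdoZero A) P = P) ∧
    (∀ P : PDO A, pdoAdd P (pdoNeg P) = pdoZero A) ∧
    -- associativity of the Leibniz product
    (∀ P Q R : PDO A, pdoMul d (pdoMul d P Q) R = pdoMul d P (pdoMul d Q R)) ∧
    -- `1·∂^0` is a two-sided identity
    (∀ P : PDO A, pdoMul d (pdoOne A) P = P) ∧
    (∀ P : PDO A, pdoMul d P (pdoOne A) = P) ∧
    -- distributivity
    (∀ P Q R : PDO A, pdoMul d P (pdoAdd Q R) = pdoAdd (pdoMul d P Q) (pdoMul d P R)) ∧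
    (∀ P Q R : PDO A, pdoMul d (pdoAdd P Q) R = pdoAdd (pdoMul d P R) (pdoMul d Q R)) :=
  pdo_ring_structure_general d hadd hleib
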